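/- arXiv:1312.0134 — 3 statements merged into one kernel-verified Lean document; each statement's English description precedes it below -/
import Mathlib

section
/- The identity 2 (-q;q)_∞ Σ_{n≥1} q^{2n}/(1−q^{2n}) = 2 Σ_{λ ∈ O} n(λ) q^{|λ|} − 2 Σ_{μ ∈ D} n(μ) q^{|μ|} holds as formal power series in q, where O is the set of partitions into odd parts, D the set of partitions into distinct parts, and n(λ) denotes the number of parts of λ. -/
open PowerSeries Finset

/-- The product (coefficient-wise convergence) topology on formal power series. -/
noncomputable instance : TopologicalSpace (PowerSeries ℚ) :=
  inferInstanceAs (TopologicalSpace ((Unit →₀ ℕ) → ℚ))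

/-- The finite q-Pochhammer symbol `(a; q)_n = ∏_{k=0}^{n-1} (1 - a q^k)`. -/
noncomputable def poch (a q : PowerSeries ℚ) (n : ℕ) : PowerSeries ℚ :=
  ∏ k ∈ range n, (1 - a * q ^ k)

/-- The infinite q-Pochhammer symbol `(a; q)_∞ = ∏_{k≥0} (1 - a q^k)`. -/
noncomputable def pochInf (a q : PowerSeries ℚ) : PowerSeries ℚ :=
  ∏' k : ℕ, (1 - a * q ^ k)

/-!
Removing one copy of a part `k` from a partition that contains it is a bijection onto the
partitions of `n - k`. So the generating function `C_k` of the total multiplicity of `k`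
satisfies `C_k = q^k (C_k + O)` over partitions into odd parts (`k` odd), and
`C_k = q^k (D - C_k)` over partitions into distinct parts, where `O = D = (-q;q)_∞` by Euler.
Hence `C_k = D q^k/(1-q^k)`, resp. `C_k = D q^k/(1+q^k) = D (q^k/(1-q^k) - 2 q^{2k}/(1-q^{2k}))`.
Summing over `k`, the difference of the two parts-counting series is `D` times the series with
coefficients `#{odd d ∣ m} - #{d ∣ m} + 2 #{even d ∣ m} = #{even d ∣ m}`, and the latter series
is `∑_{n ≥ 1} q^{2n}/(1-q^{2n})`.
-/

namespace PowerSeries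

variable (R : Type*) [CommRing R]

/-- `∑_{j ≥ 1} X ^ (k * j) = X ^ k / (1 - X ^ k)`; it is `0` for `k = 0`. -/
noncomputable def multiples (k : ℕ) : R⟦X⟧ :=
  mk fun m => if k ∈ m.divisors then 1 else 0

variable {R}

@[simp]
theorem coeff_multiples (k m : ℕ) :
    coeff m (multiples R k) = if k ∈ m.divisors then 1 else 0 :=
  coeff_mk _ _

@[simp]
theorem multiples_zero : multiples R 0 = 0 := by
  ext
  simp

theorem isUnit_one_sub_X_pow {k : ℕ} (hk : k ≠ 0) : IsUnit (1 - X ^ k : R⟦X⟧) :=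
  isUnit_iff_constantCoeff.mpr (by simp [hk])

theorem multiples_mul_one_sub_X_pow {k : ℕ} (hk : k ≠ 0) :
    multiples R k * (1 - X ^ k) = X ^ k := by
  ext m
  rw [mul_sub, mul_one, map_sub, mul_comm, coeff_X_pow_mul', coeff_X_pow, coeff_multiples]
  rcases lt_trichotomy m k with h | rfl | h
  · have : k ∉ m.divisors := fun hd => h.not_ge (Nat.divisor_le hd)
    simp [this, h.not_ge, h.ne]
  · simp [hk]
  · simp [Nat.mem_divisors, h.le, h.not_ge, h.ne', Nat.sub_ne_zero_of_lt h,
      (Nat.zero_lt_of_lt h).ne']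

theorem X_pow_mul_inv_one_sub_X_pow {K : Type*} [Field K] {k : ℕ} (hk : k ≠ 0) :
    X ^ k * (1 - X ^ k : K⟦X⟧)⁻¹ = multiples K k := by
  rw [eq_comm, eq_mul_inv_iff_mul_eq (by simp [hk])]
  exact multiples_mul_one_sub_X_pow hk

section Topology

variable [TopologicalSpace R]
open WithPiTopology

theorem hasSum_ite_multiples (q : ℕ → Prop) [DecidablePred q] :
    HasSum (fun k => if q k then multiples R k else 0)
      (mk fun m => (#{d ∈ m.divisors | q d} : R)) := by
  rw [hasSum_iff_hasSum_coeff]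
  intro m
  rw [coeff_mk, Finset.natCast_card_filter]
  convert hasSum_sum_of_ne_finset_zero (s := m.divisors) _ using 2 with k
  · split_ifs <;> simp_all
  · intro k hk
    split_ifs <;> simp_all
  · infer_instance

theorem hasSum_multiples_comp {g : ℕ → ℕ} (hg : g.Injective) {q : ℕ → Prop}
    [DecidablePred q] (hgq : ∀ n, q (g n)) (hq : ∀ k, q k → k ≠ 0 → k ∈ Set.range g) :
    HasSum (fun n => multiples R (g n)) (mk fun m => (#{d ∈ m.divisors | q d} : R)) := by
  have := hasSum_ite_multiples (R := R) q
  rw [← hg.hasSum_iff] at this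
  · simpa [Function.comp_def, hgq] using this
  · intro k hk
    by_cases hk0 : k = 0
    · simp [hk0]
    · simp only [ite_eq_right_iff]
      exact fun hqk => absurd (hq k hqk hk0) hk

theorem hasSum_multiples : HasSum (multiples R) (mk fun m => (#m.divisors : R)) := by
  simpa using hasSum_ite_multiples (R := R) fun _ => True

theorem hasSum_multiples_two_mul :
    HasSum (fun k => multiples R (2 * k)) (mk fun m => (#{d ∈ m.divisors | Even d} : R)) :=
  hasSum_multiples_comp (mul_right_injective₀ two_ne_zero) even_two_mul
    fun k hk _ => ⟨k / 2, Nat.mul_div_cancel' hk.two_dvd⟩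

end Topology

end PowerSeries

namespace Nat.Partition

open PowerSeries

variable {R : Type*} [CommRing R]

theorem count_parts_eq_zero_of_lt {n k : ℕ} (p : n.Partition) (h : n < k) :
    p.parts.count k = 0 :=
  Multiset.count_eq_zero.mpr fun hk => h.not_ge (le_of_mem_parts hk)

theorem sum_eq_sum_cons {M : Type*} [AddCommMonoid M] {n k : ℕ} (hk : k ≠ 0) (hkn : k ≤ n)
    (f : Multiset ℕ → M) (hf : ∀ m, k ∉ m → f m = 0) :
    ∑ p : n.Partition, f p.parts = ∑ q : (n - k).Partition, f (k ::ₘ q.parts) := by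
  rw [← Finset.sum_filter_of_ne (p := fun p : n.Partition => k ∈ p.parts)
      fun p _ h => not_not.mp (mt (hf p.parts) h),
    Finset.sum_subtype (p := fun p : n.Partition => k ∈ p.parts) _ fun p => by simp,
    ← (partitionWithPartEquiv (one_le_iff_ne_zero.mpr hk) hkn).symm.sum_comp]
  simp

theorem mk_sum_eq_X_pow_mul {k : ℕ} (hk : k ≠ 0) (f : Multiset ℕ → R)
    (hf : ∀ m, k ∉ m → f m = 0) :
    PowerSeries.mk (fun (n : ℕ) => ∑ p : n.Partition, f p.parts) =
      X ^ k * PowerSeries.mk fun (n : ℕ) => ∑ q : n.Partition, f (k ::ₘ q.parts) := by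
  ext n
  rw [coeff_mk, coeff_X_pow_mul', coeff_mk]
  split_ifs with hkn
  · exact sum_eq_sum_cons hk hkn f hf
  · exact Finset.sum_eq_zero fun p _ => hf _ fun h => hkn (le_of_mem_parts h)

variable (R) in
noncomputable def countSeries (s : (n : ℕ) → Finset n.Partition) (k : ℕ) : R⟦X⟧ :=
  PowerSeries.mk fun n => ∑ p ∈ s n, (p.parts.count k : R)

@[simp]
theorem countSeries_zero (s : (n : ℕ) → Finset n.Partition) : countSeries R s 0 = 0 := by
  ext n
  refine Finset.sum_eq_zero fun p _ => ?_
  simp [Multiset.count_eq_zero.mpr fun h => (p.parts_pos h).ne rfl]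

theorem countSeries_restricted_eq_X_pow_mul (p : ℕ → Prop) [DecidablePred p] {k : ℕ}
    (hk : k ≠ 0) (hpk : p k) :
    countSeries R (restricted · p) k =
      X ^ k *
        (countSeries R (restricted · p) k + PowerSeries.mk fun n => (#(restricted n p) : R)) := by
  let f : Multiset ℕ → R := fun m => if ∀ i ∈ m, p i then (m.count k : R) else 0
  calc countSeries R (restricted · p) k
      = PowerSeries.mk fun (n : ℕ) => ∑ q : n.Partition, f q.parts := by
        simp [f, countSeries, restricted, Finset.sum_filter]
    _ = X ^ k * PowerSeries.mk fun (n : ℕ) => ∑ q : n.Partition, f (k ::ₘ q.parts) :=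
        mk_sum_eq_X_pow_mul hk f fun m hm => by simp [f, Multiset.count_eq_zero.mpr hm]
    _ = _ := by
        congr 1
        ext n
        simp only [f, countSeries, restricted, coeff_mk, map_add, Finset.sum_filter,
          Multiset.mem_cons, forall_eq_or_imp, hpk, true_and, Multiset.count_cons_self,
          Nat.cast_add, Nat.cast_one]
        rw [Finset.natCast_card_filter, ← Finset.sum_add_distrib]
        simp only [ite_add_ite, add_zero]

theorem countSeries_distincts_eq_X_pow_mul {k : ℕ} (hk : k ≠ 0) :
    countSeries R distincts k =
      X ^ k * ((PowerSeries.mk fun n => (#(distincts n) : R)) - countSeries R distincts k) := by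
  let f : Multiset ℕ → R := fun m => if m.Nodup then (m.count k : R) else 0
  calc countSeries R distincts k
      = PowerSeries.mk fun (n : ℕ) => ∑ q : n.Partition, f q.parts := by
        simp [f, countSeries, distincts, Finset.sum_filter]
    _ = X ^ k * PowerSeries.mk fun (n : ℕ) => ∑ q : n.Partition, f (k ::ₘ q.parts) :=
        mk_sum_eq_X_pow_mul hk f fun m hm => by simp [f, Multiset.count_eq_zero.mpr hm]
    _ = _ := by
        congr 1
        ext n
        simp only [f, countSeries, distincts, coeff_mk, map_sub, Finset.sum_filter,
          Finset.natCast_card_filter, ← Finset.sum_sub_distrib]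
        refine Finset.sum_congr rfl fun q _ => ?_
        by_cases hq : q.parts.Nodup
        · by_cases hkq : k ∈ q.parts <;>
            simp [hq, hkq, Multiset.count_eq_one_of_mem]
        · simp [hq]

theorem countSeries_restricted (p : ℕ → Prop) [DecidablePred p] (k : ℕ) :
    countSeries R (restricted · p) k =
      (PowerSeries.mk fun n => (#(restricted n p) : R)) * if p k then multiples R k else 0 := by
  rcases eq_or_ne k 0 with rfl | hk
  · simp
  split_ifs with hpk
  · refine (isUnit_one_sub_X_pow (R := R) hk).mul_right_cancel ?_
    rw [mul_assoc, multiples_mul_one_sub_X_pow hk]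
    linear_combination countSeries_restricted_eq_X_pow_mul (R := R) p hk hpk
  · ext n
    simp only [countSeries, restricted, coeff_mk, mul_zero, map_zero]
    refine Finset.sum_eq_zero fun q hq => ?_
    simp only [Finset.mem_filter] at hq
    simp [Multiset.count_eq_zero.mpr fun h => hpk (hq.2 k h)]

/-- The right factor is `X ^ k / (1 + X ^ k)`. -/
theorem countSeries_distincts (k : ℕ) :
    countSeries R distincts k =
      (PowerSeries.mk fun n => (#(distincts n) : R)) *
        (multiples R k - 2 * multiples R (2 * k)) := by
  rcases eq_or_ne k 0 with rfl | hk
  · simp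
  have h2k : 2 * k ≠ 0 := mul_ne_zero two_ne_zero hk
  have h1 := multiples_mul_one_sub_X_pow (R := R) hk
  have h2 := multiples_mul_one_sub_X_pow (R := R) h2k
  refine (isUnit_one_sub_X_pow (R := R) h2k).mul_right_cancel ?_
  rw [pow_mul'] at h2 ⊢
  linear_combination (1 - X ^ k) * countSeries_distincts_eq_X_pow_mul (R := R) hk
    - (PowerSeries.mk fun n => (#(distincts n) : R)) * (1 + X ^ k) * h1
    + 2 * (PowerSeries.mk fun n => (#(distincts n) : R)) * h2

section Topology

open WithPiTopology

theorem hasSum_countSeries [TopologicalSpace R] (s : (n : ℕ) → Finset n.Partition) :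
    HasSum (countSeries R s) (PowerSeries.mk fun n => ∑ p ∈ s n, (p.parts.card : R)) := by
  rw [hasSum_iff_hasSum_coeff]
  intro n
  simp only [countSeries, coeff_mk]
  convert hasSum_sum_of_ne_finset_zero (s := Finset.range (n + 1)) ?_ using 1
  · rw [Finset.sum_comm]
    refine Finset.sum_congr rfl fun p _ => ?_
    rw [← Nat.cast_sum, Multiset.sum_count_eq_card]
    exact fun i hi => Finset.mem_range_succ_iff.mpr (le_of_mem_parts hi)
  · exact fun k hk => Finset.sum_eq_zero fun p _ => by
      rw [count_parts_eq_zero_of_lt p (by simpa using hk), Nat.cast_zero]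
  · infer_instance

end Topology

open WithPiTopology in
theorem mk_sum_card_parts_restricted (p : ℕ → Prop) [DecidablePred p] :
    (PowerSeries.mk fun n => ∑ l ∈ restricted n p, (l.parts.card : R)) =
      (PowerSeries.mk fun n => (#(restricted n p) : R)) *
        PowerSeries.mk fun m => (#{d ∈ m.divisors | p d} : R) := by
  -- any topology on `R` will do: all these sums are finite coefficientwise
  let _ : TopologicalSpace R := ⊥
  have _ : DiscreteTopology R := ⟨rfl⟩
  refine (hasSum_countSeries _).unique ?_
  rw [funext (countSeries_restricted p)]
  exact (hasSum_ite_multiples (R := R) p).mul_left _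

open WithPiTopology in
theorem mk_sum_card_parts_distincts :
    (PowerSeries.mk fun n => ∑ l ∈ distincts n, (l.parts.card : R)) =
      (PowerSeries.mk fun n => (#(distincts n) : R)) *
        ((PowerSeries.mk fun m => (#m.divisors : R)) -
          2 * PowerSeries.mk fun m => (#{d ∈ m.divisors | Even d} : R)) := by
  let _ : TopologicalSpace R := ⊥
  have _ : DiscreteTopology R := ⟨rfl⟩
  refine (hasSum_countSeries _).unique ?_
  rw [funext countSeries_distincts]
  exact ((hasSum_multiples (R := R)).sub
    ((hasSum_multiples_two_mul (R := R)).mul_left 2)).mul_left _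

theorem mk_sum_card_parts_odds :
    (PowerSeries.mk fun n => ∑ l ∈ odds n, (l.parts.card : R)) =
      (PowerSeries.mk fun n => (#(distincts n) : R)) *
        PowerSeries.mk fun m => (#{d ∈ m.divisors | ¬Even d} : R) := by
  simp only [← card_odds_eq_card_distincts]
  exact mk_sum_card_parts_restricted _

end Nat.Partition

theorem pochInf_neg_X_X :
    pochInf (-X) X = PowerSeries.mk fun n => (#(Nat.Partition.distincts n) : ℚ) := by
  have h := Nat.Partition.hasProd_powerSeriesMk_card_countRestricted ℚ two_pos
  simp only [Nat.Partition.countRestricted_two] at h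
  rw [show (fun i => ∑ j ∈ range 2, (X : ℚ⟦X⟧) ^ ((i + 1) * j)) = fun k => 1 - -X * X ^ k
    from funext fun k => by simp [Finset.sum_range_succ, pow_succ, mul_comm]] at h
  open WithPiTopology in exact h.tprod_eq

theorem tsum_X_pow_mul_inv_one_sub_X_pow :
    ∑' n : ℕ, X ^ (2 * (n + 1)) * (1 - X ^ (2 * (n + 1)) : PowerSeries ℚ)⁻¹ =
      PowerSeries.mk fun m => (#{d ∈ m.divisors | Even d} : ℚ) := by
  rw [tsum_congr fun n => X_pow_mul_inv_one_sub_X_pow (Nat.mul_ne_zero two_ne_zero n.succ_ne_zero)]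
  open WithPiTopology in
  exact (hasSum_multiples_comp (fun a b h => by simpa using h) (fun n => even_two_mul (n + 1))
    fun k hk hk0 => ⟨k / 2 - 1, by obtain ⟨r, rfl⟩ := hk; simp only; omega⟩).tsum_eq

/-- `2(-q;q)_∞ Σ_{n≥1} q^{2n}/(1-q^{2n})` equals twice the generating
function for the number of parts over partitions into odd parts minus twice that over
partitions into distinct parts. -/
theorem parts_odd_minus_distinct :
    2 * pochInf (-X) X
        * ∑' n : ℕ, X ^ (2 * (n + 1)) * (1 - X ^ (2 * (n + 1)) : PowerSeries ℚ)⁻¹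
      = 2 * PowerSeries.mk (fun N => ∑ l ∈ Nat.Partition.odds N, (l.parts.card : ℚ))
        - 2 * PowerSeries.mk (fun N => ∑ m ∈ Nat.Partition.distincts N, (m.parts.card : ℚ)) := by
  have hsplit : (PowerSeries.mk fun m => (#{d ∈ m.divisors | ¬Even d} : ℚ)) =
      (PowerSeries.mk fun m => (#m.divisors : ℚ)) -
        PowerSeries.mk fun m => (#{d ∈ m.divisors | Even d} : ℚ) := by
    ext m
    rw [coeff_mk, map_sub, coeff_mk, coeff_mk, eq_sub_iff_add_eq, add_comm, ← Nat.cast_add,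
      Finset.card_filter_add_card_filter_not]
  rw [pochInf_neg_X_X, tsum_X_pow_mul_inv_one_sub_X_pow, Nat.Partition.mk_sum_card_parts_odds,
    Nat.Partition.mk_sum_card_parts_distincts, hsplit]
  ring
end

section
/- Fine's transformation: Σ_{n≥0} ((aq;q)_n/(bq;q)_n) t^n = ((1−b)/(1−t)) Σ_{n≥0} ((atq/b;q)_n/(tq;q)_n) b^n, valid as an identity of formal power series (or of analytic functions for |q|,|t|,|b|<1, b≠0). -/
/-!
Let `F(t) = ∑ cₙ tⁿ` with `cₙ = (aq;q)ₙ/(bq;q)ₙ`. From `cₙ₊₁ (1 - bqⁿ⁺¹) = cₙ (1 - aqⁿ⁺¹)` one gets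
the `q`-difference equation `(1 - t) F(t) = (1 - b) + (b - atq) F(tq)`. Iterating it along
`t, tq, tq², …` writes `F(t)` as the `N`-th partial sum of the right-hand side plus `P_N F(tqᴺ)`,
where `P_N` is the product of the factors `(b - atqⁿ⁺¹)/(1 - tqⁿ)`, `n < N`. These factors tend
to `b`, so `P_N` decays geometrically, while `F` stays bounded on the disc of radius `|t|`.
-/

open Finset Filter Topology

def qPochhammer {R : Type*} [CommRing R] (a q : R) (n : ℕ) : R :=
  ∏ k ∈ range n, (1 - a * q ^ k)

section CommRing

variable {R : Type*} [CommRing R] (a q : R)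

@[simp]
theorem qPochhammer_zero : qPochhammer a q 0 = 1 :=
  prod_range_zero _

theorem qPochhammer_succ (n : ℕ) :
    qPochhammer a q (n + 1) = qPochhammer a q n * (1 - a * q ^ n) :=
  prod_range_succ _ n

theorem qPochhammer_succ' (n : ℕ) :
    qPochhammer a q (n + 1) = (1 - a) * qPochhammer (a * q) q n := by
  rw [qPochhammer, prod_range_succ', pow_zero, mul_one, mul_comm]
  simp only [qPochhammer, pow_succ', mul_assoc]

end CommRing

section Field

variable {K : Type*} [Field K]

theorem div_qPochhammer_mul_div_one_sub (x y t q : K) (n : ℕ) :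
    x / qPochhammer t q n * (y / (1 - t * q ^ n))
      = y / (1 - t) * (x / qPochhammer (t * q) q n) := by
  rw [div_mul_div_comm, ← qPochhammer_succ, qPochhammer_succ', mul_comm x, mul_div_mul_comm]

theorem pow_mul_qPochhammer_div_qPochhammer_succ {b : K} (hb : b ≠ 0) (c t q : K) (n : ℕ) :
    b ^ (n + 1) * qPochhammer (c / b) q (n + 1) / qPochhammer t q (n + 1)
      = b ^ n * qPochhammer (c / b) q n / qPochhammer t q n
        * ((b - c * q ^ n) / (1 - t * q ^ n)) := by
  have hbc : b * (1 - c / b * q ^ n) = b - c * q ^ n := by field_simp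
  rw [qPochhammer_succ, qPochhammer_succ, div_mul_div_comm, ← hbc]
  ring

def fineCoeff (a b q : K) (n : ℕ) : K :=
  qPochhammer (a * q) q n / qPochhammer (b * q) q n

theorem fineCoeff_succ (a b q : K) (n : ℕ) :
    fineCoeff a b q (n + 1) = fineCoeff a b q n * ((1 - a * q * q ^ n) / (1 - b * q * q ^ n)) := by
  rw [fineCoeff, fineCoeff, qPochhammer_succ, qPochhammer_succ, mul_div_mul_comm]

theorem fineCoeff_succ_mul (a : K) {b q : K} {n : ℕ} (hn : 1 - b * q * q ^ n ≠ 0) :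
    fineCoeff a b q (n + 1) * (1 - b * q * q ^ n) = fineCoeff a b q n * (1 - a * q * q ^ n) := by
  rw [fineCoeff_succ, mul_assoc, div_mul_cancel₀ _ hn]

end Field

theorem one_sub_ne_zero_of_norm_lt_one {R : Type*} [SeminormedRing R] [NormOneClass R] {x : R}
    (hx : ‖x‖ < 1) : 1 - x ≠ 0 := by
  intro h
  rw [← eq_of_sub_eq_zero h, norm_one] at hx
  exact hx.false

theorem norm_mul_pow_le_of_norm_le_one {𝕜 : Type*} [NormedDivisionRing 𝕜] (a : 𝕜) {q : 𝕜}
    (hq : ‖q‖ ≤ 1) (k : ℕ) : ‖a * q ^ k‖ ≤ ‖a‖ := by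
  rw [norm_mul, norm_pow]
  exact mul_le_of_le_one_right (norm_nonneg a) (pow_le_one₀ (norm_nonneg q) hq)

theorem tendsto_div_one_sub_mul_pow {𝕜 : Type*} [NormedField 𝕜] {q : 𝕜} (hq : ‖q‖ < 1)
    (c d t : 𝕜) : Tendsto (fun n => (c - d * q ^ n) / (1 - t * q ^ n)) atTop (𝓝 c) := by
  have hqn := tendsto_pow_atTop_nhds_zero_of_norm_lt_one hq
  have h := ((tendsto_const_nhds (x := c)).sub (hqn.const_mul d)).div
    (tendsto_const_nhds.sub (hqn.const_mul t)) (by simp : (1 : 𝕜) - t * 0 ≠ 0)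
  rwa [mul_zero, mul_zero, sub_zero, sub_zero, div_one] at h

theorem summable_norm_of_succ_eq_mul {R : Type*} [SeminormedRing R] {f r : ℕ → R} {L : R}
    (hf : ∀ n, f (n + 1) = f n * r n) (hr : Tendsto r atTop (𝓝 L)) (hL : ‖L‖ < 1) :
    Summable fun n => ‖f n‖ := by
  obtain ⟨ρ, hLρ, hρ1⟩ := exists_between hL
  refine summable_of_ratio_norm_eventually_le hρ1 ?_
  filter_upwards [hr.norm.eventually (gt_mem_nhds hLρ)] with n hn
  rw [norm_norm, norm_norm, hf, mul_comm ρ]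
  exact (norm_mul_le _ _).trans (mul_le_mul_of_nonneg_left hn.le (norm_nonneg _))

theorem summable_mul_of_summable_norm_of_tendsto {R : Type*} [NormedRing R] [CompleteSpace R]
    {f g : ℕ → R} {c : R} (hf : Summable fun n => ‖f n‖) (hg : Tendsto g atTop (𝓝 c)) :
    Summable fun n => f n * g n := by
  refine .of_norm_bounded_eventually_nat (hf.mul_right (‖c‖ + 1)) ?_
  filter_upwards [hg.norm.eventually (gt_mem_nhds (lt_add_one ‖c‖))] with n hn
  exact (norm_mul_le _ _).trans (mul_le_mul_of_nonneg_left hn.le (norm_nonneg _))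

theorem hasSum_of_eq_add_mul_succ {R : Type*} [NormedCommRing R] {x α β P : ℕ → R}
    (hx : ∀ n, x n = α n + β n * x (n + 1)) (hP0 : P 0 = 1) (hP : ∀ n, P (n + 1) = P n * β n)
    (hx_bdd : IsBoundedUnder (· ≤ ·) atTop (norm ∘ x)) (hP_lim : Tendsto P atTop (𝓝 0))
    (hsum : Summable fun n => P n * α n) :
    HasSum (fun n => P n * α n) (x 0) := by
  have hpartial (N : ℕ) : ∑ n ∈ range N, P n * α n = x 0 - P N * x N := by
    induction N with
    | zero => simp [hP0]
    | succ N ih => rw [sum_range_succ, ih, hP, hx N]; ring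
  rw [hsum.hasSum_iff_tendsto_nat, funext hpartial]
  simpa using tendsto_const_nhds.sub (hP_lim.zero_mul_isBoundedUnder_le hx_bdd)

section FineSeries

variable {𝕜 : Type*} [NormedField 𝕜] {a b q s t : 𝕜}

noncomputable def fineSeries (a b q t : 𝕜) : 𝕜 :=
  ∑' n, fineCoeff a b q n * t ^ n

theorem summable_norm_fineCoeff_mul_pow (a b : 𝕜) (hq : ‖q‖ < 1) (ht : ‖t‖ < 1) :
    Summable fun n => ‖fineCoeff a b q n * t ^ n‖ := by
  have hratio : Tendsto (fun n => (1 - a * q * q ^ n) / (1 - b * q * q ^ n) * t) atTop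
      (𝓝 (1 * t)) :=
    (tendsto_div_one_sub_mul_pow hq 1 (a * q) (b * q)).mul_const t
  refine summable_norm_of_succ_eq_mul (fun n => ?_) hratio (by rwa [one_mul])
  rw [fineCoeff_succ, pow_succ]
  ring

theorem norm_fineSeries_le (a b : 𝕜) (hq : ‖q‖ < 1) (ht : ‖t‖ < 1) (hst : ‖s‖ ≤ ‖t‖) :
    ‖fineSeries a b q s‖ ≤ ∑' n, ‖fineCoeff a b q n * t ^ n‖ := by
  have hs := summable_norm_fineCoeff_mul_pow a b hq (hst.trans_lt ht)
  refine (norm_tsum_le_tsum_norm hs).trans <|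
    hs.tsum_le_tsum (fun n => ?_) (summable_norm_fineCoeff_mul_pow a b hq ht)
  simp only [norm_mul, norm_pow]
  gcongr

theorem one_sub_mul_fineSeries [CompleteSpace 𝕜] (a : 𝕜) (hq : ‖q‖ < 1) (hb : ‖b‖ < 1)
    (hs : ‖s‖ < 1) :
    (1 - s) * fineSeries a b q s = (1 - b) + (b - a * s * q) * fineSeries a b q (s * q) := by
  have hbq : ‖b * q‖ < 1 := by
    rw [norm_mul]; exact mul_lt_one_of_nonneg_of_lt_one_left (norm_nonneg b) hb hq.le
  have hsq : ‖s * q‖ < 1 := by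
    rw [norm_mul]; exact mul_lt_one_of_nonneg_of_lt_one_left (norm_nonneg s) hs hq.le
  have hF := (summable_norm_fineCoeff_mul_pow a b hq hs).of_norm.hasSum
  have hFq := (summable_norm_fineCoeff_mul_pow a b hq hsq).of_norm.hasSum
  -- sum `cₙ sⁿ (1 - bqⁿ)` directly, and after splitting off `n = 0` and using the recursion
  set u : ℕ → 𝕜 := fun n => fineCoeff a b q n * s ^ n * (1 - b * q ^ n) with hu
  have hsum : HasSum u (fineSeries a b q s - b * fineSeries a b q (s * q)) :=
    (hF.sub (hFq.mul_left b)).congr_fun fun n => by rw [hu]; ring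
  have htail : HasSum (fun n => u (n + 1))
      (s * fineSeries a b q s - a * s * q * fineSeries a b q (s * q)) := by
    refine ((hF.mul_left s).sub (hFq.mul_left (a * s * q))).congr_fun fun n => ?_
    simp only [hu]
    rw [show fineCoeff a b q (n + 1) * s ^ (n + 1) * (1 - b * q ^ (n + 1))
        = s ^ (n + 1) * (fineCoeff a b q (n + 1) * (1 - b * q * q ^ n)) by ring,
      fineCoeff_succ_mul a (one_sub_ne_zero_of_norm_lt_one
        ((norm_mul_pow_le_of_norm_le_one _ hq.le n).trans_lt hbq))]
    ring
  have h := htail.zero_add.unique hsum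
  simp only [hu, fineCoeff, qPochhammer_zero, pow_zero] at h
  linear_combination -h

theorem fineSeries_eq_add_mul [CompleteSpace 𝕜] (a : 𝕜) (hq : ‖q‖ < 1) (hb : ‖b‖ < 1)
    (hs : ‖s‖ < 1) :
    fineSeries a b q s
      = (1 - b) / (1 - s) + (b - a * s * q) / (1 - s) * fineSeries a b q (s * q) := by
  have hs1 := one_sub_ne_zero_of_norm_lt_one hs
  field_simp
  linear_combination one_sub_mul_fineSeries a hq hb hs

theorem hasSum_fineSeries [CompleteSpace 𝕜] (a : 𝕜) (hq : ‖q‖ < 1) (ht : ‖t‖ < 1)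
    (hb : ‖b‖ < 1) (hb0 : b ≠ 0) :
    HasSum (fun n => (1 - b) / (1 - t) *
        (qPochhammer (a * t * q / b) q n / qPochhammer (t * q) q n * b ^ n))
      (fineSeries a b q t) := by
  set α : ℕ → 𝕜 := fun n => (1 - b) / (1 - t * q ^ n)
  set β : ℕ → 𝕜 := fun n => (b - a * t * q * q ^ n) / (1 - t * q ^ n)
  -- the closed form of `∏_{k<n} β k`
  set P : ℕ → 𝕜 := fun n => b ^ n * qPochhammer (a * t * q / b) q n / qPochhammer t q n
  have htqn : ∀ n, ‖t * q ^ n‖ ≤ ‖t‖ := norm_mul_pow_le_of_norm_le_one t hq.le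
  have hrec (n : ℕ) :
      fineSeries a b q (t * q ^ n) = α n + β n * fineSeries a b q (t * q ^ (n + 1)) := by
    have h := fineSeries_eq_add_mul a hq hb ((htqn n).trans_lt ht)
    rwa [mul_assoc t, ← pow_succ, show a * (t * q ^ n) * q = a * t * q * q ^ n by ring] at h
  have hP (n : ℕ) : P (n + 1) = P n * β n :=
    pow_mul_qPochhammer_div_qPochhammer_succ hb0 (a * t * q) t q n
  have hα : Tendsto α atTop (𝓝 (1 - b)) := by
    simpa using tendsto_div_one_sub_mul_pow hq (1 - b) 0 t
  have hP_norm := summable_norm_of_succ_eq_mul hP (tendsto_div_one_sub_mul_pow hq b _ t) hb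
  have hsum := hasSum_of_eq_add_mul_succ hrec (by simp [P]) hP
    (isBoundedUnder_of ⟨_, fun n => norm_fineSeries_le a b hq ht (htqn n)⟩)
    (tendsto_zero_iff_norm_tendsto_zero.2 hP_norm.tendsto_atTop_zero)
    (summable_mul_of_summable_norm_of_tendsto hP_norm hα)
  convert hsum using 1
  · funext n
    rw [div_qPochhammer_mul_div_one_sub]
    ring
  · simp

end FineSeries

/-- Fine's transformation
`Σ_{n≥0} ((aq;q)_n/(bq;q)_n) t^n = ((1-b)/(1-t)) Σ_{n≥0} ((atq/b;q)_n/(tq;q)_n) b^n`,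
as an identity of analytic functions for `|q|, |t|, |b| < 1`, `b ≠ 0`. -/
theorem fine_transformation (aa b q t : ℂ) (hq : ‖q‖ < 1) (ht : ‖t‖ < 1) (hb : ‖b‖ < 1)
    (hb0 : b ≠ 0) :
    ∑' n : ℕ, (∏ k ∈ range n, (1 - aa * q * q ^ k)) / (∏ k ∈ range n, (1 - b * q * q ^ k))
        * t ^ n
      = (1 - b) / (1 - t)
        * ∑' n : ℕ, (∏ k ∈ range n, (1 - aa * t * q / b * q ^ k))
            / (∏ k ∈ range n, (1 - t * q * q ^ k)) * b ^ n := by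
  rw [← tsum_mul_left]
  exact (hasSum_fineSeries aa hq ht hb hb0).tsum_eq.symm
end

section
/- As formal power series in q: Σ_{n≥0} ( 1/(q;q)_∞ − 1/(q;q)_n ) = (1/(q;q)_∞) Σ_{n≥1} q^n/(1−q^n). -/
open PowerSeries Finset

/-!
Write `uₙ = 1/(q;q)ₙ`. Since `uₙ₊₁ - uₙ = qⁿ⁺¹ uₙ₊₁`, the tails telescope and the left-hand
side equals `B = ∑ₘ m qᵐ uₘ`, the `z`-derivative at `z = 1` of `A(z) = ∑ₘ zᵐ qᵐ uₘ`.
Instead of differentiating, evaluate at `z = qʲ`: the functional equation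
`A(z) = A(zq) + zq A(z)` gives `aⱼ₊₁ = (1 - qʲ⁺¹) aⱼ` and `bⱼ₊₁ = (1 - qʲ⁺¹) bⱼ - qʲ⁺¹ aⱼ`
for `aⱼ = ∑ₘ q^{m(j+1)} uₘ` and `bⱼ = ∑ₘ m q^{m(j+1)} uₘ`, whence `aⱼ = (q;q)ⱼ a₀` and
`bⱼ = (q;q)ⱼ (b₀ - a₀ ∑_{k ≤ j} qᵏ/(1 - qᵏ))`. As `j → ∞`, `aⱼ → 1` and `bⱼ → 0`
`q`-adically, so `a₀ = 1/(q;q)_∞` and `B = b₀ = a₀ ∑ₖ qᵏ/(1 - qᵏ)`.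
-/

open Filter Topology

section XAdic

open PowerSeries.WithPiTopology

variable {R : Type*} [TopologicalSpace R]

theorem isClosed_setOf_X_pow_dvd [Semiring R] [T1Space R] (k : ℕ) :
    IsClosed {f : R⟦X⟧ | X ^ k ∣ f} := by
  simp_rw [X_pow_dvd_iff, Set.ofPred_forall]
  exact isClosed_iInter fun m => isClosed_iInter fun _ =>
    isClosed_singleton.preimage (continuous_coeff R m)

theorem X_pow_dvd_tsum [CommSemiring R] [T1Space R] {ι : Type*} {k : ℕ} {f : ι → R⟦X⟧}
    (h : ∀ i, X ^ k ∣ f i) :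
    X ^ k ∣ ∑' i, f i := by
  have hclosed : IsClosed (Ideal.span {(X : R⟦X⟧) ^ k} : Set R⟦X⟧) := by
    convert isClosed_setOf_X_pow_dvd (R := R) k
    ext f
    exact Ideal.mem_span_singleton
  exact Ideal.mem_span_singleton.mp <|
    tsum_mem hclosed fun i => Ideal.mem_span_singleton.mpr (h i)

theorem summable_of_X_pow_dvd [Semiring R] {f : ℕ → R⟦X⟧} (h : ∀ n, X ^ n ∣ f n) :
    Summable f :=
  (summable_iff_summable_coeff R).mpr fun d => summable_of_ne_finset_zero (s := range (d + 1))
    fun n hn => X_pow_dvd_iff.mp (h n) d (by simpa using hn)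

theorem tendsto_zero_of_X_pow_dvd [Semiring R] {f : ℕ → R⟦X⟧} (h : ∀ n, X ^ n ∣ f n) :
    Tendsto f atTop (𝓝 0) := by
  refine (tendsto_iff_coeff_tendsto R f atTop 0).mpr fun d => ?_
  refine tendsto_atTop_of_eventually_const (i₀ := d + 1) fun n hn => ?_
  rw [map_zero]
  exact X_pow_dvd_iff.mp (h n) d (by omega)

end XAdic

-- The topology above is that of `PowerSeries.WithPiTopology`, whose instances are scoped.
instance : T2Space ℚ⟦X⟧ := PowerSeries.WithPiTopology.instT2Space ℚ

instance : IsTopologicalRing ℚ⟦X⟧ := PowerSeries.WithPiTopology.instIsTopologicalRing ℚ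

theorem poch_X_X_succ (n : ℕ) : poch X X (n + 1) = poch X X n * (1 - X ^ (n + 1)) := by
  rw [poch, prod_range_succ, ← pow_succ']
  rfl

theorem constantCoeff_poch_X_X (n : ℕ) : constantCoeff (poch X X n) = 1 := by
  simp [poch]

theorem X_pow_dvd_poch_X_X_sub_poch_X_X {n m : ℕ} (h : n ≤ m) :
    X ^ (n + 1) ∣ poch X X m - poch X X n := by
  induction m, h using Nat.le_induction with
  | base => simp
  | succ m hnm ih =>
    rw [poch_X_X_succ, show poch X X m * (1 - X ^ (m + 1)) - poch X X n =
      (poch X X m - poch X X n) - poch X X m * X ^ (m + 1) by ring]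
    exact dvd_sub ih (Dvd.dvd.mul_left (pow_dvd_pow X (by omega)) _)

theorem hasProd_pochInf_X_X : HasProd (fun k => 1 - X * X ^ k) (pochInf X X) := by
  simp_rw [pochInf, ← pow_succ']
  exact (PowerSeries.WithPiTopology.multipliable_one_sub_X_pow ℚ).hasProd

theorem tendsto_poch_X_X : Tendsto (poch X X) atTop (𝓝 (pochInf X X)) :=
  hasProd_pochInf_X_X.tendsto_prod_nat

theorem X_pow_dvd_pochInf_X_X_sub_poch_X_X (n : ℕ) :
    X ^ (n + 1) ∣ pochInf X X - poch X X n :=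
  (isClosed_setOf_X_pow_dvd (n + 1)).mem_of_tendsto (tendsto_poch_X_X.sub_const _)
    ((eventually_ge_atTop n).mono fun _ => X_pow_dvd_poch_X_X_sub_poch_X_X)

theorem constantCoeff_pochInf_X_X : constantCoeff (pochInf X X) = 1 := by
  have h := X_dvd_iff.mp (by simpa using X_pow_dvd_pochInf_X_X_sub_poch_X_X 0)
  simpa [poch, sub_eq_zero] using h

theorem poch_X_X_mul_inv (n : ℕ) : poch X X n * (poch X X n)⁻¹ = 1 :=
  PowerSeries.mul_inv_cancel _ (by simp [constantCoeff_poch_X_X])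

theorem pochInf_X_X_mul_inv : pochInf X X * (pochInf X X)⁻¹ = 1 :=
  PowerSeries.mul_inv_cancel _ (by simp [constantCoeff_pochInf_X_X])

theorem mul_inv_one_sub_X_pow (k : ℕ) : (1 - X ^ (k + 1)) * (1 - X ^ (k + 1) : ℚ⟦X⟧)⁻¹ = 1 :=
  PowerSeries.mul_inv_cancel _ (by simp)

theorem inv_poch_X_X_eq_mul_inv_succ (n : ℕ) :
    (poch X X n)⁻¹ = (1 - X ^ (n + 1)) * (poch X X (n + 1))⁻¹ := by
  linear_combination -(poch X X n)⁻¹ * poch_X_X_mul_inv (n + 1)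
    + (1 - X ^ (n + 1)) * (poch X X (n + 1))⁻¹ * poch_X_X_mul_inv n
    + (poch X X n)⁻¹ * (poch X X (n + 1))⁻¹ * poch_X_X_succ n

theorem X_pow_dvd_inv_pochInf_X_X_sub_inv_poch_X_X (n : ℕ) :
    X ^ (n + 1) ∣ (pochInf X X)⁻¹ - (poch X X n)⁻¹ := by
  have h : (pochInf X X)⁻¹ - (poch X X n)⁻¹ =
      -((pochInf X X)⁻¹ * (poch X X n)⁻¹) * (pochInf X X - poch X X n) := by
    linear_combination (poch X X n)⁻¹ * pochInf_X_X_mul_inv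
      - (pochInf X X)⁻¹ * poch_X_X_mul_inv n
  rw [h]
  exact Dvd.dvd.mul_left (X_pow_dvd_pochInf_X_X_sub_poch_X_X n) _

noncomputable def eulerTerm (w : ℕ → ℚ) (j m : ℕ) : ℚ⟦X⟧ :=
  w m • (X ^ (m * (j + 1)) * (poch X X m)⁻¹)

/-- `∑ₘ w(m) zᵐ qᵐ / (q;q)ₘ` at `z = qʲ`: `w = 1` gives `aⱼ`, `w = id` gives `bⱼ`. -/
noncomputable def eulerSum (w : ℕ → ℚ) (j : ℕ) : ℚ⟦X⟧ :=
  ∑' m, eulerTerm w j m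

theorem X_pow_dvd_eulerTerm (w : ℕ → ℚ) (j m : ℕ) : X ^ (m * (j + 1)) ∣ eulerTerm w j m := by
  rw [eulerTerm, smul_eq_C_mul]
  exact Dvd.dvd.mul_left (dvd_mul_right _ _) _

theorem summable_eulerTerm (w : ℕ → ℚ) (j : ℕ) : Summable (eulerTerm w j) :=
  summable_of_X_pow_dvd fun m =>
    (pow_dvd_pow X (Nat.le_mul_of_pos_right m j.succ_pos)).trans (X_pow_dvd_eulerTerm w j m)

theorem eulerTerm_zero (w : ℕ → ℚ) (j : ℕ) : eulerTerm w j 0 = C (w 0) := by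
  simp [eulerTerm, poch, smul_eq_C_mul]

theorem eulerTerm_succ (w : ℕ → ℚ) (j m : ℕ) :
    eulerTerm w j (m + 1) =
      eulerTerm w (j + 1) (m + 1) + X ^ (j + 1) * eulerTerm (fun m => w (m + 1)) j m := by
  simp only [eulerTerm, smul_eq_C_mul, inv_poch_X_X_eq_mul_inv_succ m]
  rw [show (m + 1) * (j + 1 + 1) = (m + 1) * (j + 1) + (m + 1) by ring,
    show (m + 1) * (j + 1) = (j + 1) + m * (j + 1) by ring, pow_add, pow_add]
  ring

theorem eulerSum_eq_eulerSum_succ_add (w : ℕ → ℚ) (j : ℕ) :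
    eulerSum w j = eulerSum w (j + 1) + X ^ (j + 1) * eulerSum (fun m => w (m + 1)) j := by
  have hshift (w : ℕ → ℚ) (j : ℕ) : Summable fun m => eulerTerm w j (m + 1) :=
    (summable_nat_add_iff 1).mpr (summable_eulerTerm w j)
  rw [eulerSum, (summable_eulerTerm w j).tsum_eq_zero_add, eulerSum,
    (summable_eulerTerm w (j + 1)).tsum_eq_zero_add, eulerSum, eulerTerm_zero, eulerTerm_zero]
  rw [tsum_congr (eulerTerm_succ w j),
    (hshift w (j + 1)).tsum_add ((summable_eulerTerm _ j).mul_left _),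
    (summable_eulerTerm _ j).tsum_mul_left]
  ring

theorem eulerSum_add (w w' : ℕ → ℚ) (j : ℕ) :
    eulerSum (w + w') j = eulerSum w j + eulerSum w' j := by
  simp only [eulerSum, eulerTerm, Pi.add_apply, add_smul]
  exact (summable_eulerTerm w j).tsum_add (summable_eulerTerm w' j)

theorem X_pow_dvd_eulerSum_sub (w : ℕ → ℚ) (j : ℕ) :
    X ^ (j + 1) ∣ eulerSum w j - C (w 0) := by
  rw [eulerSum, (summable_eulerTerm w j).tsum_eq_zero_add, eulerTerm_zero, add_sub_cancel_left]
  exact X_pow_dvd_tsum fun m => (pow_dvd_pow X (Nat.le_mul_of_pos_left _ m.succ_pos)).trans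
    (X_pow_dvd_eulerTerm w j (m + 1))

theorem tendsto_eulerSum (w : ℕ → ℚ) : Tendsto (eulerSum w) atTop (𝓝 (C (w 0))) :=
  tendsto_sub_nhds_zero_iff.mp <| tendsto_zero_of_X_pow_dvd fun j =>
    (pow_dvd_pow X j.le_succ).trans (X_pow_dvd_eulerSum_sub w j)

theorem eulerSum_one_eq_poch_X_X_mul (j : ℕ) : eulerSum 1 j = poch X X j * eulerSum 1 0 := by
  induction j with
  | zero => rw [poch, prod_range_zero, one_mul]
  | succ j ih =>
    have h : eulerSum 1 j = eulerSum 1 (j + 1) + X ^ (j + 1) * eulerSum 1 j :=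
      eulerSum_eq_eulerSum_succ_add 1 j
    linear_combination -h + (1 - X ^ (j + 1)) * ih - eulerSum 1 0 * poch_X_X_succ j

theorem eulerSum_one_zero : eulerSum 1 0 = (pochInf X X)⁻¹ := by
  have h : Tendsto (eulerSum 1) atTop (𝓝 (pochInf X X * eulerSum 1 0)) :=
    (tendsto_poch_X_X.mul_const _).congr fun j => (eulerSum_one_eq_poch_X_X_mul j).symm
  rw [PowerSeries.eq_inv_iff_mul_eq_one (by simp [constantCoeff_pochInf_X_X]), mul_comm]
  simpa using tendsto_nhds_unique h (tendsto_eulerSum 1)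

theorem eulerSum_natCast_eq_poch_X_X_mul (j : ℕ) :
    eulerSum Nat.cast j = poch X X j * (eulerSum Nat.cast 0 -
      eulerSum 1 0 * ∑ k ∈ range j, X ^ (k + 1) * (1 - X ^ (k + 1) : ℚ⟦X⟧)⁻¹) := by
  induction j with
  | zero => simp [poch]
  | succ j ih =>
    have h : eulerSum Nat.cast j =
        eulerSum Nat.cast (j + 1) + X ^ (j + 1) * (eulerSum Nat.cast j + eulerSum 1 j) := by
      rw [← eulerSum_add, eulerSum_eq_eulerSum_succ_add]
      congr 3
      ext m
      simp
    rw [sum_range_succ]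
    set S := ∑ k ∈ range j, X ^ (k + 1) * (1 - X ^ (k + 1) : ℚ⟦X⟧)⁻¹
    linear_combination -h + (1 - X ^ (j + 1)) * ih
      - X ^ (j + 1) * eulerSum_one_eq_poch_X_X_mul j
      - (eulerSum Nat.cast 0 - eulerSum 1 0 * (S + X ^ (j + 1) * (1 - X ^ (j + 1))⁻¹))
        * poch_X_X_succ j
      + X ^ (j + 1) * poch X X j * eulerSum 1 0 * mul_inv_one_sub_X_pow j

theorem summable_X_pow_mul_inv_one_sub_X_pow :
    Summable fun k => X ^ (k + 1) * (1 - X ^ (k + 1) : ℚ⟦X⟧)⁻¹ :=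
  summable_of_X_pow_dvd fun k => (pow_dvd_pow X k.le_succ).trans (dvd_mul_right _ _)

theorem eulerSum_natCast_zero :
    eulerSum Nat.cast 0 =
      (pochInf X X)⁻¹ * ∑' k, X ^ (k + 1) * (1 - X ^ (k + 1) : ℚ⟦X⟧)⁻¹ := by
  set T := ∑' k, X ^ (k + 1) * (1 - X ^ (k + 1) : ℚ⟦X⟧)⁻¹
  have hlim : Tendsto (eulerSum Nat.cast) atTop
      (𝓝 (pochInf X X * (eulerSum Nat.cast 0 - eulerSum 1 0 * T))) :=
    (tendsto_poch_X_X.mul (tendsto_const_nhds.sub (tendsto_const_nhds.mul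
      summable_X_pow_mul_inv_one_sub_X_pow.hasSum.tendsto_sum_nat))).congr
      fun j => (eulerSum_natCast_eq_poch_X_X_mul j).symm
  have hzero : pochInf X X * (eulerSum Nat.cast 0 - eulerSum 1 0 * T) = 0 := by
    simpa using tendsto_nhds_unique hlim (tendsto_eulerSum Nat.cast)
  have hne : pochInf X X ≠ 0 := fun h => by simpa [h] using constantCoeff_pochInf_X_X
  rw [← eulerSum_one_zero, ← sub_eq_zero]
  exact (mul_eq_zero.mp hzero).resolve_left hne

theorem sum_range_inv_pochInf_X_X_sub_inv_poch_X_X (N : ℕ) :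
    ∑ n ∈ range N, ((pochInf X X)⁻¹ - (poch X X n)⁻¹) =
      (N : ℚ) • ((pochInf X X)⁻¹ - (poch X X N)⁻¹) +
        ∑ m ∈ range (N + 1), eulerTerm Nat.cast 0 m := by
  induction N with
  | zero => simp [eulerTerm]
  | succ N ih =>
    rw [sum_range_succ, ih, sum_range_succ _ (N + 1)]
    simp only [eulerTerm, smul_eq_C_mul, Nat.cast_add, Nat.cast_one, map_add, map_one]
    linear_combination -(C (N : ℚ) + 1) * inv_poch_X_X_eq_mul_inv_succ N

theorem hasSum_inv_pochInf_X_X_sub_inv_poch_X_X :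
    HasSum (fun n => (pochInf X X)⁻¹ - (poch X X n)⁻¹) (eulerSum Nat.cast 0) := by
  have hdvd (n : ℕ) : X ^ n ∣ (pochInf X X)⁻¹ - (poch X X n)⁻¹ :=
    (pow_dvd_pow X n.le_succ).trans (X_pow_dvd_inv_pochInf_X_X_sub_inv_poch_X_X n)
  have hsummable : Summable fun n => (pochInf X X)⁻¹ - (poch X X n)⁻¹ :=
    summable_of_X_pow_dvd hdvd
  rw [hsummable.hasSum_iff_tendsto_nat]
  have hsmul :
      Tendsto (fun N : ℕ => (N : ℚ) • ((pochInf X X)⁻¹ - (poch X X N)⁻¹)) atTop (𝓝 0) :=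
    tendsto_zero_of_X_pow_dvd fun N => by
      rw [smul_eq_C_mul]
      exact Dvd.dvd.mul_left (hdvd N) _
  have hterms : Tendsto (fun N => ∑ m ∈ range (N + 1), eulerTerm Nat.cast 0 m) atTop
      (𝓝 (eulerSum Nat.cast 0)) :=
    (tendsto_add_atTop_iff_nat 1).mpr (summable_eulerTerm _ 0).hasSum.tendsto_sum_nat
  simpa only [sum_range_inv_pochInf_X_X_sub_inv_poch_X_X, zero_add] using hsmul.add hterms

/-- sums of tails for the partition generating function. -/
theorem sum_of_tails_partitions :
    ∑' n : ℕ, ((pochInf X X)⁻¹ - (poch X X n)⁻¹)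
      = (pochInf X X)⁻¹ * ∑' n : ℕ, X ^ (n + 1) * (1 - X ^ (n + 1) : PowerSeries ℚ)⁻¹ := by
  rw [hasSum_inv_pochInf_X_X_sub_inv_poch_X_X.tsum_eq, eulerSum_natCast_zero]
end
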